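/- For every real number x > 0, writing ψ(x) = 2Φ(x) − 1, one has ψ(x)² − (x³ + x)φ(x)·ψ(x) − 2x²φ(x)² > 0. -/

import Mathlib

open Real Set MeasureTheory

/-- The standard normal probability density function. -/
noncomputable def phi (x : ℝ) : ℝ := (Real.sqrt (2 * Real.pi))⁻¹ * Real.exp (-x ^ 2 / 2)

/-- The standard normal cumulative distribution function. -/
noncomputable def Phi (x : ℝ) : ℝ := ∫ r in Set.Iic x, phi r

/-- ψ(x) = 2Φ(x) − 1. -/
noncomputable def psi (x : ℝ) : ℝ := 2 * Phi x - 1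

lemma phi_pos (x : ℝ) : 0 < phi x := by
  have h : (0:ℝ) < Real.sqrt (2 * Real.pi) := Real.sqrt_pos.mpr (by positivity)
  exact mul_pos (inv_pos.mpr h) (Real.exp_pos _)

lemma phi_eq : phi = fun x => (Real.sqrt (2 * Real.pi))⁻¹ * Real.exp (-(1/2) * x ^ 2) := by
  funext x; simp only [phi]; ring_nf

lemma phi_continuous : Continuous phi := by
  rw [phi_eq]; continuity

lemma phi_integrable : Integrable phi := by
  rw [phi_eq]
  exact (integrable_exp_neg_mul_sq (by norm_num : (0:ℝ) < 1/2)).const_mul _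

lemma integral_phi : ∫ x, phi x = 1 := by
  rw [phi_eq, MeasureTheory.integral_const_mul, integral_gaussian]
  rw [show Real.pi / (1/2) = 2 * Real.pi by ring]
  rw [inv_mul_cancel₀]
  exact ne_of_gt (Real.sqrt_pos.mpr (by positivity))

lemma Phi_zero : Phi 0 = 1 / 2 := by
  have heven : (∫ x in Iic (0:ℝ), phi x) = ∫ x in Ioi (0:ℝ), phi x := by
    rw [← neg_zero, ← integral_comp_neg_Iic, neg_zero]
    apply setIntegral_congr_fun measurableSet_Iic
    intro y _
    simp only [phi, neg_sq]
  have hsplit : (∫ x in Iic (0:ℝ), phi x) + (∫ x in Ioi (0:ℝ), phi x) = 1 := by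
    rw [← integral_phi]
    rw [← MeasureTheory.setIntegral_union (Iic_disjoint_Ioi le_rfl) measurableSet_Ioi
      phi_integrable.integrableOn phi_integrable.integrableOn, Iic_union_Ioi,
      Measure.restrict_univ]
  have : (2:ℝ) * ∫ x in Iic (0:ℝ), phi x = 1 := by
    rw [two_mul]; nth_rewrite 2 [heven]; exact hsplit
  simp only [Phi]
  linarith

lemma hasDerivAt_Phi (x : ℝ) : HasDerivAt Phi (phi x) x := by
  have key : ∀ u : ℝ, Phi u = (∫ t in (0:ℝ)..u, phi t) + Phi 0 := by
    intro u
    have := intervalIntegral.integral_Iic_sub_Iic (μ := volume) (f := phi)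
      phi_integrable.integrableOn phi_integrable.integrableOn (a := 0) (b := u)
    simp only [Phi]
    linarith
  have h1 : HasDerivAt (fun u => (∫ t in (0:ℝ)..u, phi t) + Phi 0) (phi x) x :=
    ((phi_continuous.integral_hasStrictDerivAt 0 x).hasDerivAt).add_const _
  exact h1.congr_deriv rfl |>.congr_of_eventuallyEq (Filter.Eventually.of_forall key)

lemma hasDerivAt_phi (x : ℝ) : HasDerivAt phi (-x * phi x) x := by
  have h1 : HasDerivAt (fun x : ℝ => -x ^ 2 / 2) (-x) x := by
    have := ((hasDerivAt_pow 2 x).neg).div_const 2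
    refine this.congr_deriv ?_
    simp; ring
  have h2 := (h1.exp).const_mul (Real.sqrt (2 * Real.pi))⁻¹
  refine h2.congr_deriv ?_
  simp only [phi]; ring

lemma hasDerivAt_psi (x : ℝ) : HasDerivAt psi (2 * phi x) x := by
  exact ((hasDerivAt_Phi x).const_mul 2).sub_const 1

lemma psi_zero : psi 0 = 0 := by simp [psi, Phi_zero]

/-- Helper: if f 0 = 0 and f' > 0 on (0,∞) then f > 0 on (0,∞). -/
lemma pos_of_deriv_pos (f f' : ℝ → ℝ) (hf : ∀ x, HasDerivAt f (f' x) x)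
    (h0 : f 0 = 0) (hpos : ∀ x, 0 < x → 0 < f' x) : ∀ x, 0 < x → 0 < f x := by
  intro x hx
  have hmono : StrictMonoOn f (Ici (0:ℝ)) := by
    apply strictMonoOn_of_deriv_pos (convex_Ici 0)
    · exact fun y _ => ((hf y).differentiableAt).continuousAt.continuousWithinAt
    · intro y hy
      rw [interior_Ici] at hy
      rw [(hf y).deriv]
      exact hpos y hy
  have := hmono (le_refl (0:ℝ) : (0:ℝ) ∈ Ici 0) (le_of_lt hx : x ∈ Ici 0) hx
  linarith [h0]

lemma psi_pos (x : ℝ) (hx : 0 < x) : 0 < psi x := by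
  refine pos_of_deriv_pos psi (fun y => 2 * phi y) hasDerivAt_psi psi_zero ?_ x hx
  intro y _; have := phi_pos y; positivity

lemma k_pos (x : ℝ) (hx : 0 < x) : 0 < 2 * x * phi x + (x ^ 2 - 1) * psi x := by
  refine pos_of_deriv_pos (fun x => 2 * x * phi x + (x ^ 2 - 1) * psi x)
    (fun x => 2 * x * psi x) (fun y => ?_) (by simp [psi_zero]) ?_ x hx
  · have h := (((hasDerivAt_id y).const_mul 2).mul (hasDerivAt_phi y)).add
      ((((hasDerivAt_pow 2 y).sub_const 1)).mul (hasDerivAt_psi y))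
    refine h.congr_deriv ?_
    simp only [id_eq]
    ring
  · intro y hy
    exact mul_pos (by linarith) (psi_pos y hy)

lemma h_pos (x : ℝ) (hx : 0 < x) :
    0 < psi x * (x ^ 4 - 2 * x ^ 2 + 3) - 2 * x * phi x * (3 - x ^ 2) := by
  refine pos_of_deriv_pos (fun x => psi x * (x ^ 4 - 2 * x ^ 2 + 3) - 2 * x * phi x * (3 - x ^ 2))
    (fun x => 4 * x * (2 * x * phi x + (x ^ 2 - 1) * psi x)) (fun y => ?_)
    (by simp [psi_zero]) ?_ x hx
  · have hpoly : HasDerivAt (fun x : ℝ => x ^ 4 - 2 * x ^ 2 + 3) (4 * y ^ 3 - 4 * y) y := by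
      have := (((hasDerivAt_pow 4 y).sub ((hasDerivAt_pow 2 y).const_mul 2))).add_const 3
      refine this.congr_deriv ?_; push_cast; ring
    have hpoly2 : HasDerivAt (fun x : ℝ => 3 - x ^ 2) (-(2 * y)) y := by
      have := (hasDerivAt_pow 2 y).const_sub 3
      refine this.congr_deriv ?_; push_cast; ring
    have h := ((hasDerivAt_psi y).mul hpoly).sub
      ((((hasDerivAt_id y).const_mul 2).mul (hasDerivAt_phi y)).mul hpoly2)
    refine h.congr_deriv ?_
    simp only [id_eq, Pi.mul_apply]
    ring
  · intro y hy
    exact mul_pos (by linarith) (k_pos y hy)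

theorem q_psi_pos (x : ℝ) (hx : 0 < x) :
    0 < psi x ^ 2 - (x ^ 3 + x) * phi x * psi x - 2 * x ^ 2 * phi x ^ 2 := by
  refine pos_of_deriv_pos
    (fun x => psi x ^ 2 - (x ^ 3 + x) * phi x * psi x - 2 * x ^ 2 * phi x ^ 2)
    (fun x => phi x * (psi x * (x ^ 4 - 2 * x ^ 2 + 3) - 2 * x * phi x * (3 - x ^ 2)))
    (fun y => ?_) (by simp [psi_zero]) ?_ x hx
  · have hp1 : HasDerivAt (fun x : ℝ => x ^ 3 + x) (3 * y ^ 2 + 1) y := by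
      have := (hasDerivAt_pow 3 y).add (hasDerivAt_id y)
      refine this.congr_deriv ?_; norm_num
    have h := (((hasDerivAt_psi y).pow 2).sub
      (((hp1.mul (hasDerivAt_phi y)).mul (hasDerivAt_psi y)))).sub
      ((((hasDerivAt_pow 2 y).const_mul 2).mul ((hasDerivAt_phi y).pow 2)))
    refine h.congr_deriv ?_
    simp only [id_eq, Pi.mul_apply, Pi.pow_apply]
    ring
  · intro y hy
    exact mul_pos (phi_pos y) (h_pos y hy)
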